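/- Let 0 < α < 1 and r > 0. For every complex number ω, (1/(2π)) ∫_0^{2π} |r e^{iθ} − ω|^{−α} dθ ≤ 1/((1−α) r^α). -/

import Mathlib

/-!
Rotating by `arg ω` and taking imaginary parts gives `‖r e^{iθ} - ω‖ ≥ r |sin (θ - arg ω)|`,
so the mean is at most `r^(-α)` times the mean of `|sin|^(-α)`. As `|sin|` is even and
`π`-periodic, that mean is the mean over `[0, π/2]`, where Jordan's inequality
`sin θ ≥ 2θ/π` bounds it by `(π/2)^α` times the mean of `θ^(-α)`, which is `(π/2)^(-α) / (1 - α)`;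
so the mean of `|sin|^(-α)` is at most `1 / (1 - α)`.
-/

open Real Complex MeasureTheory intervalIntegral

section EvenPeriodic

variable {E : Type*} [NormedAddCommGroup E] {f : ℝ → E} {T : ℝ}

theorem Function.Periodic.intervalIntegrable_of_even (hf : Function.Periodic f T) (hT : T ≠ 0)
    (heven : ∀ x, f (-x) = f x) (hint : IntervalIntegrable f volume 0 (T / 2)) (a b : ℝ) :
    IntervalIntegrable f volume a b := by
  have hneg : IntervalIntegrable f volume (-(T / 2)) 0 := by
    simpa [heven] using ((IntervalIntegrable.iff_comp_neg).mp hint).symm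
  refine hf.intervalIntegrable hT (t := -(T / 2)) ?_ a b
  rw [show -(T / 2) + T = T / 2 by ring]
  exact hneg.trans hint

theorem Function.Periodic.intervalIntegral_eq_two_smul_of_even [NormedSpace ℝ E]
    (hf : Function.Periodic f T) (heven : ∀ x, f (-x) = f x)
    (hint : ∀ a b, IntervalIntegrable f volume a b) :
    ∫ x in 0..T, f x = 2 • ∫ x in 0..T / 2, f x := by
  calc ∫ x in 0..T, f x = ∫ x in -(T / 2)..-(T / 2) + T, f x := by
        rw [hf.intervalIntegral_add_eq (-(T / 2)) 0, zero_add]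
    _ = (∫ x in -(T / 2)..0, f x) + ∫ x in 0..T / 2, f x := by
        rw [show -(T / 2) + T = T / 2 by ring, integral_add_adjacent_intervals (hint _ _) (hint _ _)]
    _ = 2 • ∫ x in 0..T / 2, f x := by
        have hsymm := integral_comp_neg (a := 0) (b := T / 2) f
        simp only [heven, neg_zero] at hsymm
        rw [← hsymm, two_smul]

end EvenPeriodic

section AbsSinRpow

variable {α : ℝ}

lemma abs_sin_rpow_neg_le (hα : 0 ≤ α) {θ : ℝ} (hθ₀ : 0 < θ) (hθ : θ ≤ π / 2) :
    |Real.sin θ| ^ (-α) ≤ (π / 2) ^ α * θ ^ (-α) := by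
  calc |Real.sin θ| ^ (-α) ≤ (2 / π * θ) ^ (-α) :=
        rpow_le_rpow_of_nonpos (by positivity) ((mul_le_sin hθ₀.le hθ).trans (le_abs_self _))
          (by linarith)
    _ = (π / 2) ^ α * θ ^ (-α) := by
        rw [mul_rpow (by positivity) hθ₀.le, rpow_neg (by positivity), ← inv_rpow (by positivity),
          inv_div]

lemma abs_sin_rpow_periodic (β : ℝ) : Function.Periodic (fun θ => |Real.sin θ| ^ β) π := by
  intro θ
  simp only [Real.sin_add_pi, abs_neg]

lemma abs_sin_rpow_periodic_two_pi (β : ℝ) :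
    Function.Periodic (fun θ => |Real.sin θ| ^ β) (2 * π) := by
  intro θ
  simp only [Real.sin_add_two_pi]

lemma abs_sin_neg_rpow (β θ : ℝ) : |Real.sin (-θ)| ^ β = |Real.sin θ| ^ β := by
  rw [Real.sin_neg, abs_neg]

lemma intervalIntegrable_abs_sin_rpow_neg (hα₀ : 0 ≤ α) (hα₁ : α < 1) (a b : ℝ) :
    IntervalIntegrable (fun θ => |Real.sin θ| ^ (-α)) volume a b := by
  refine (abs_sin_rpow_periodic _).intervalIntegrable_of_even pi_ne_zero
    (abs_sin_neg_rpow _) ?_ a b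
  refine (((intervalIntegrable_rpow' (by linarith : -1 < -α)).const_mul ((π / 2) ^ α))).mono_fun'
    (Measurable.aestronglyMeasurable (by fun_prop)) ?_
  rw [Filter.EventuallyLE, Set.uIoc_of_le (by positivity)]
  refine (ae_restrict_mem measurableSet_Ioc).mono fun θ hθ => ?_
  rw [Real.norm_of_nonneg (by positivity)]
  exact abs_sin_rpow_neg_le hα₀ hθ.1 hθ.2

lemma integral_zero_pi_div_two_abs_sin_rpow_neg_le (hα₀ : 0 ≤ α) (hα₁ : α < 1) :
    ∫ θ in 0..π / 2, |Real.sin θ| ^ (-α) ≤ π / 2 / (1 - α) := by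
  have hint := (intervalIntegrable_rpow' (a := 0) (b := π / 2) (by linarith : -1 < -α)).const_mul
    ((π / 2) ^ α)
  calc ∫ θ in 0..π / 2, |Real.sin θ| ^ (-α) ≤ ∫ θ in 0..π / 2, (π / 2) ^ α * θ ^ (-α) :=
        integral_mono_on_of_le_Ioo (by positivity) (intervalIntegrable_abs_sin_rpow_neg hα₀ hα₁ _ _)
          hint fun θ hθ => abs_sin_rpow_neg_le hα₀ hθ.1 hθ.2.le
    _ = π / 2 / (1 - α) := by
        rw [intervalIntegral.integral_const_mul, integral_rpow (Or.inl (by linarith)),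
          zero_rpow (by linarith), show -α + 1 = 1 - α by ring, sub_zero, mul_div_assoc',
          ← rpow_add (by positivity), add_sub_cancel, rpow_one]

lemma integral_abs_sin_sub_rpow_neg_le (hα₀ : 0 ≤ α) (hα₁ : α < 1) (φ : ℝ) :
    ∫ θ in 0..2 * π, |Real.sin (θ - φ)| ^ (-α) ≤ 2 * π / (1 - α) := by
  have hint := intervalIntegrable_abs_sin_rpow_neg hα₀ hα₁
  have hshift : ∫ θ in 0..2 * π, |Real.sin (θ - φ)| ^ (-α) =
      ∫ θ in 0..2 * π, |Real.sin θ| ^ (-α) := by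
    rw [integral_comp_sub_right (fun θ => |Real.sin θ| ^ (-α)), zero_sub,
      show 2 * π - φ = -φ + 2 * π by ring,
      (abs_sin_rpow_periodic_two_pi _).intervalIntegral_add_eq (-φ) 0, zero_add]
  have hquarters : ∫ θ in 0..2 * π, |Real.sin θ| ^ (-α) =
      4 * ∫ θ in 0..π / 2, |Real.sin θ| ^ (-α) := by
    rw [(abs_sin_rpow_periodic_two_pi _).intervalIntegral_eq_two_smul_of_even
        (abs_sin_neg_rpow _) hint, mul_div_cancel_left₀ _ two_ne_zero,
      (abs_sin_rpow_periodic _).intervalIntegral_eq_two_smul_of_even (abs_sin_neg_rpow _) hint,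
      smul_smul, nsmul_eq_mul]
    norm_num
  calc ∫ θ in 0..2 * π, |Real.sin (θ - φ)| ^ (-α)
      = 4 * ∫ θ in 0..π / 2, |Real.sin θ| ^ (-α) := hshift.trans hquarters
    _ ≤ 4 * (π / 2 / (1 - α)) := by
        gcongr
        exact integral_zero_pi_div_two_abs_sin_rpow_neg_le hα₀ hα₁
    _ = 2 * π / (1 - α) := by ring

end AbsSinRpow

lemma abs_mul_sin_sub_arg_le_norm (r θ : ℝ) (ω : ℂ) :
    |r * Real.sin (θ - arg ω)| ≤ ‖(r : ℂ) * exp (θ * I) - ω‖ := by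
  have hrot : exp (↑(-arg ω) * I) * ((r : ℂ) * exp (θ * I) - ω) =
      (r : ℂ) * exp (↑(θ - arg ω) * I) - ‖ω‖ := by
    have hω : exp (↑(-arg ω) * I) * ω = ‖ω‖ := by
      nth_rw 2 [← norm_mul_exp_arg_mul_I ω]
      rw [mul_left_comm, ← Complex.exp_add]
      push_cast
      simp
    rw [mul_sub, hω, mul_left_comm, ← Complex.exp_add]
    push_cast
    ring_nf
  calc |r * Real.sin (θ - arg ω)|
      = |(exp (↑(-arg ω) * I) * ((r : ℂ) * exp (θ * I) - ω)).im| := by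
        rw [hrot, sub_im, ofReal_im, sub_zero, im_ofReal_mul, exp_ofReal_mul_I_im]
    _ ≤ ‖exp (↑(-arg ω) * I) * ((r : ℂ) * exp (θ * I) - ω)‖ := abs_im_le_norm _
    _ = ‖(r : ℂ) * exp (θ * I) - ω‖ := by rw [norm_mul, norm_exp_ofReal_mul_I, one_mul]

lemma ae_sin_sub_ne_zero (φ : ℝ) : ∀ᵐ θ : ℝ, Real.sin (θ - φ) ≠ 0 := by
  have hzeros : {θ | ¬Real.sin (θ - φ) ≠ 0} ⊆ Set.range (fun n : ℤ => n * π + φ) := by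
    intro θ hθ
    obtain ⟨n, hn⟩ := Real.sin_eq_zero_iff.1 (not_not.1 hθ)
    exact ⟨n, by linarith⟩
  exact ae_iff.2 (measure_mono_null hzeros ((Set.countable_range _).measure_zero volume))

lemma norm_mul_exp_sub_rpow_neg_le {α r θ : ℝ} (hα : 0 ≤ α) (hr : 0 < r) (ω : ℂ)
    (hsin : Real.sin (θ - arg ω) ≠ 0) :
    ‖(r : ℂ) * exp (θ * I) - ω‖ ^ (-α) ≤ r ^ (-α) * |Real.sin (θ - arg ω)| ^ (-α) := by
  rw [← mul_rpow hr.le (abs_nonneg _)]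
  refine rpow_le_rpow_of_nonpos (by positivity) ?_ (by linarith)
  simpa [abs_mul, abs_of_pos hr] using abs_mul_sin_sub_arg_le_norm r θ ω

theorem circle_integral_inv_rpow (α : ℝ) (hα0 : 0 < α) (hα1 : α < 1)
    (r : ℝ) (hr : 0 < r) (ω : ℂ) :
    (1 / (2 * π)) * ∫ θ in (0:ℝ)..(2 * π),
        ‖(r : ℂ) * Complex.exp (θ * Complex.I) - ω‖ ^ (-α) ≤
      1 / ((1 - α) * r ^ α) := by
  have hle : ∀ᵐ θ : ℝ, ‖(r : ℂ) * exp (θ * I) - ω‖ ^ (-α) ≤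
      r ^ (-α) * |Real.sin (θ - arg ω)| ^ (-α) :=
    (ae_sin_sub_ne_zero (arg ω)).mono fun θ hθ => norm_mul_exp_sub_rpow_neg_le hα0.le hr ω hθ
  have hint : IntervalIntegrable (fun θ => r ^ (-α) * |Real.sin (θ - arg ω)| ^ (-α))
      volume 0 (2 * π) := by
    simpa using ((intervalIntegrable_abs_sin_rpow_neg hα0.le hα1 (0 - arg ω)
      (2 * π - arg ω)).comp_sub_right (arg ω)).const_mul (r ^ (-α))
  have hintegral : ∫ θ in 0..2 * π, ‖(r : ℂ) * exp (θ * I) - ω‖ ^ (-α) ≤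
      r ^ (-α) * (2 * π / (1 - α)) := by
    calc ∫ θ in 0..2 * π, ‖(r : ℂ) * exp (θ * I) - ω‖ ^ (-α)
        ≤ ∫ θ in 0..2 * π, r ^ (-α) * |Real.sin (θ - arg ω)| ^ (-α) := by
          rw [integral_of_le two_pi_pos.le, integral_of_le two_pi_pos.le]
          exact integral_mono_of_nonneg (ae_of_all _ fun θ => by positivity) hint.1
            (ae_restrict_of_ae hle)
      _ = r ^ (-α) * ∫ θ in 0..2 * π, |Real.sin (θ - arg ω)| ^ (-α) :=
          intervalIntegral.integral_const_mul _ _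
      _ ≤ r ^ (-α) * (2 * π / (1 - α)) := by
          gcongr
          exact integral_abs_sin_sub_rpow_neg_le hα0.le hα1 (arg ω)
  calc (1 / (2 * π)) * ∫ θ in 0..2 * π, ‖(r : ℂ) * exp (θ * I) - ω‖ ^ (-α)
      ≤ (1 / (2 * π)) * (r ^ (-α) * (2 * π / (1 - α))) := by gcongr
    _ = 1 / ((1 - α) * r ^ α) := by
        rw [rpow_neg hr.le]
        field_simp
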